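/- arXiv:1408.3864 — 6 statements merged into one kernel-verified Lean document; each statement's English description precedes it below -/
import Mathlib

section
/- For the Laplace distribution characteristic function f(t) = 1/(1 + a²t²), written as f(t) = (1/2)·1/(1 - iat) + (1/2)·1/(1 + iat), if for each integer n ≥ 1 one defines g_n(t) = exp((1/a)(1 - (1 + a²t²)^{1/n})), then replacing e^{it} by g_n(t) and e^{-it} by g_n(-t) in the two summands (using that g_n is symmetric, i.e. g_n(-t) = g_n(t)) yields the normalized function f̃_n(t) = 1/(1 - a·ln g_n(t)), and this satisfies f̃_n(t)^n = f(t) for all real t. -/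
/-!
Since `log ∘ exp = id`, we get `1 - a ln g_n(t) = (1 + a²t²)^(1/n)`, so `f̃_n(t)` is the
`n`-th root of `f(t) = (1 + a²t²)⁻¹`.
-/

open Real

lemma one_sub_mul_log_exp_one_div_mul {a : ℝ} (ha : a ≠ 0) (y : ℝ) :
    1 - a * log (exp ((1 / a) * (1 - y))) = y := by
  rw [log_exp]
  field_simp
  ring

lemma one_div_rpow_one_div_pow {x : ℝ} (hx : 0 ≤ x) {n : ℕ} (hn : n ≠ 0) :
    (1 / x ^ ((1 : ℝ) / n)) ^ n = 1 / x := by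
  rw [one_div_pow, one_div (n : ℝ), rpow_inv_natCast_pow hx hn]

/-- The Laplace distribution with characteristic function `f t = 1/(1 + a²t²)` is casually
stable: with `g_n t = exp((1/a)(1 - (1 + a²t²)^(1/n)))` (which is symmetric, `g_n (-t) = g_n t`),
the `g_n`-normalization `f̃_n t = 1/(1 - a * ln (g_n t))` (coming from replacing `e^{it}` by
`g_n t` and `e^{-it}` by `g_n (-t)` in the two summands of `f`) satisfies `f̃_n t ^ n = f t`. -/
theorem laplace_casual_stable (a : ℝ) (ha : 0 < a) (n : ℕ) (hn : 1 ≤ n) (t : ℝ) :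
    (fun s : ℝ => Real.exp ((1 / a) * (1 - (1 + a ^ 2 * s ^ 2) ^ ((1 : ℝ) / n)))) (-t)
      = (fun s : ℝ => Real.exp ((1 / a) * (1 - (1 + a ^ 2 * s ^ 2) ^ ((1 : ℝ) / n)))) t ∧
    ((1 : ℝ) / 2) * (1 / (1 - a * Real.log (Real.exp ((1 / a) * (1 - (1 + a ^ 2 * t ^ 2) ^ ((1 : ℝ) / n))))))
      + ((1 : ℝ) / 2) * (1 / (1 - a * Real.log (Real.exp ((1 / a) * (1 - (1 + a ^ 2 * (-t) ^ 2) ^ ((1 : ℝ) / n))))))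
      = 1 / (1 - a * Real.log (Real.exp ((1 / a) * (1 - (1 + a ^ 2 * t ^ 2) ^ ((1 : ℝ) / n))))) ∧
    (1 / (1 - a * Real.log (Real.exp ((1 / a) * (1 - (1 + a ^ 2 * t ^ 2) ^ ((1 : ℝ) / n)))))) ^ n
      = 1 / (1 + a ^ 2 * t ^ 2) := by
  refine ⟨by simp only [neg_sq], by rw [neg_sq]; ring, ?_⟩
  rw [one_sub_mul_log_exp_one_div_mul ha.ne',
    one_div_rpow_one_div_pow (by positivity) (Nat.one_le_iff_ne_zero.mp hn)]
end

section
/- For n ≥ 1 an integer, the function Q_n(z) = (1/p)(1 - (1-p)^{1-1/n}(1-pz)^{1/n}), with p ∈ (0,1), is a probability generating function: its Taylor coefficients at z = 0 are nonnegative and Q_n(1) = 1. -/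
open Real Polynomial

/-! By the binomial series, `1 - c (1 - p z) ^ a = (1 - c) - c ∑_{k ≥ 1} C(a, k) (-p) ^ k z ^ k`.
For `0 ≤ a ≤ 1` the binomial coefficients `C(a, k)` alternate in sign from `k = 1` on, so
`C(a, k) (-1) ^ k ≤ 0` for `k ≥ 1`, and every coefficient is nonnegative as soon as `0 ≤ c ≤ 1`.
With `a = 1/n` and `c = (1 - p) ^ (1 - 1/n)` the value at `z = 1` is `(1 - (1 - p)) / p = 1`. -/

theorem Ring.choose_succ_mul_succ {K : Type*} [Field K] [CharZero K] (a : K) (k : ℕ) :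
    Ring.choose a (k + 1) * (k + 1) = Ring.choose a k * (a - k) := by
  simp only [Ring.choose_eq_smul, smul_eq_mul, descPochhammer_succ_right, smeval_mul, smeval_sub,
    smeval_X, smeval_natCast, Nat.factorial_succ]
  push_cast
  field_simp
  simp

theorem Ring.choose_mul_neg_one_pow_nonpos {K : Type*} [Field K] [LinearOrder K]
    [IsStrictOrderedRing K] {a : K} (ha0 : 0 ≤ a) (ha1 : a ≤ 1) {k : ℕ} (hk : k ≠ 0) :
    Ring.choose a k * (-1) ^ k ≤ 0 := by
  obtain ⟨k, rfl⟩ := Nat.exists_eq_add_one_of_ne_zero hk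
  induction k with
  | zero => simpa using ha0
  | succ k ih =>
    have hrec : Ring.choose a (k + 2) * (-1) ^ (k + 2)
        = Ring.choose a (k + 1) * (-1) ^ (k + 1) * ((k + 1 - a) / (k + 2)) := by
      rw [mul_div_assoc', eq_div_iff (by positivity)]
      have := Ring.choose_succ_mul_succ a (k + 1)
      push_cast at this
      linear_combination (-1) ^ (k + 2) * this
    rw [hrec]
    exact mul_nonpos_of_nonpos_of_nonneg (ih (by omega))
      (div_nonneg (by linarith [(Nat.cast_nonneg k : (0 : K) ≤ k)]) (by positivity))

theorem Real.hasSum_one_add_rpow {a x : ℝ} (hx : |x| < 1) :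
    HasSum (fun k => Ring.choose a k * x ^ k) ((1 + x) ^ a) := by
  have := one_add_rpow_hasFPowerSeriesOnBall_zero (a := a) |>.hasSum (y := x)
    (by simpa [enorm_eq_nnnorm, ← NNReal.coe_lt_one] using hx)
  simpa [binomialSeries, FormalMultilinearSeries.ofScalars_apply_eq, mul_comm] using this

noncomputable def normalizerCoeff (a c p : ℝ) (k : ℕ) : ℝ :=
  1 / p * ((if k = 0 then 1 else 0) - c * (Ring.choose a k * (-p) ^ k))

theorem hasSum_normalizerCoeff_mul_pow {a c p z : ℝ} (h : |p * z| < 1) :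
    HasSum (fun k => normalizerCoeff a c p k * z ^ k) (1 / p * (1 - c * (1 - p * z) ^ a)) := by
  have hbinom := hasSum_one_add_rpow (a := a) (x := -(p * z)) (by rwa [abs_neg])
  rw [← sub_eq_add_neg] at hbinom
  refine (((hasSum_ite_eq 0 1).sub (hbinom.mul_left c)).mul_left (1 / p)).congr_fun fun k => ?_
  rw [normalizerCoeff, neg_mul_eq_neg_mul, mul_pow]
  split_ifs with hk
  · subst hk; ring
  · ring

theorem normalizerCoeff_nonneg {a c p : ℝ} (ha0 : 0 ≤ a) (ha1 : a ≤ 1) (hp : 0 < p)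
    (hc0 : 0 ≤ c) (hc1 : c ≤ 1) (k : ℕ) : 0 ≤ normalizerCoeff a c p k := by
  rw [normalizerCoeff]
  refine mul_nonneg (by positivity) ?_
  split_ifs with hk
  · simpa [hk] using hc1
  · have hsign := Ring.choose_mul_neg_one_pow_nonpos ha0 ha1 hk
    have hsplit : c * (Ring.choose a k * (-p) ^ k) = c * p ^ k * (Ring.choose a k * (-1) ^ k) := by
      rw [neg_pow]; ring
    rw [hsplit, zero_sub, neg_nonneg]
    exact mul_nonpos_of_nonneg_of_nonpos (by positivity) hsign

theorem geometric_normalizer_is_pgf_general (p : ℝ) (hp : p ∈ Set.Ioo (0 : ℝ) 1) (n : ℕ) :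
    (∃ b : ℕ → ℝ, (∀ k, 0 ≤ b k) ∧ Summable b ∧ (∑' k, b k) = 1 ∧
      ∀ z ∈ Set.Icc (0 : ℝ) 1,
        (1 / p) * (1 - (1 - p) ^ (1 - (1 : ℝ) / n) * (1 - p * z) ^ ((1 : ℝ) / n))
          = ∑' k, b k * z ^ k) ∧
    (1 / p) * (1 - (1 - p) ^ (1 - (1 : ℝ) / n) * (1 - p * 1) ^ ((1 : ℝ) / n)) = 1 := by
  obtain ⟨hp0, hp1⟩ := hp
  have ha1 : (1 : ℝ) / n ≤ 1 := by simpa only [one_div] using Nat.cast_inv_le_one n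
  set b := normalizerCoeff (1 / n) ((1 - p) ^ (1 - (1 : ℝ) / n)) p
  have hb : ∀ k, 0 ≤ b k := normalizerCoeff_nonneg (by positivity) ha1 hp0
    (rpow_nonneg (by linarith) _) (rpow_le_one (by linarith) (by linarith) (by linarith))
  have hQ : ∀ z ∈ Set.Icc (0 : ℝ) 1, HasSum (fun k => b k * z ^ k)
      ((1 / p) * (1 - (1 - p) ^ (1 - (1 : ℝ) / n) * (1 - p * z) ^ ((1 : ℝ) / n))) :=
    fun z hz => hasSum_normalizerCoeff_mul_pow <| by
      rw [abs_of_nonneg (mul_nonneg hp0.le hz.1)]; nlinarith [hz.2]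
  have hQ1 : (1 / p) * (1 - (1 - p) ^ (1 - (1 : ℝ) / n) * (1 - p * 1) ^ ((1 : ℝ) / n)) = 1 := by
    rw [mul_one, ← rpow_add (by linarith), sub_add_cancel, rpow_one]
    field_simp
    ring
  have hsum : HasSum b 1 := by
    have h := hQ 1 ⟨zero_le_one, le_rfl⟩
    rw [hQ1] at h
    simpa only [one_pow, mul_one] using h
  exact ⟨⟨b, hb, hsum.summable, hsum.tsum_eq, fun z hz => (hQ z hz).tsum_eq.symm⟩, hQ1⟩

/-- For `n ≥ 1` and `p ∈ (0,1)`, the function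
`Q_n z = (1/p)(1 - (1-p)^(1-1/n) (1-pz)^(1/n))` is a probability generating function:
it is given on `[0,1]` by a power series with nonnegative coefficients, the coefficients
sum to `1`, and `Q_n 1 = 1`. -/
theorem geometric_normalizer_is_pgf (p : ℝ) (hp : p ∈ Set.Ioo (0 : ℝ) 1) (n : ℕ) (hn : 1 ≤ n) :
    (∃ b : ℕ → ℝ, (∀ k, 0 ≤ b k) ∧ Summable b ∧ (∑' k, b k) = 1 ∧
      ∀ z ∈ Set.Icc (0 : ℝ) 1,
        (1 / p) * (1 - (1 - p) ^ (1 - (1 : ℝ) / n) * (1 - p * z) ^ ((1 : ℝ) / n))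
          = ∑' k, b k * z ^ k) ∧
    (1 / p) * (1 - (1 - p) ^ (1 - (1 : ℝ) / n) * (1 - p * 1) ^ ((1 : ℝ) / n)) = 1 :=
  geometric_normalizer_is_pgf_general p hp n
end

section
/- Let P(z) = ((1 - √(1 - z²))/z)^M for a positive integer M, and Q_n(z) = 1/T_n(1/z) where T_n is the n-th Chebyshev polynomial of the first kind. Then P(Q_n(z)) = P(z)^n for all z ∈ (0,1] and every integer n ≥ 1. -/
open Real Polynomial

theorem T_real_cosh (u : ℝ) (n : ℤ) :
    (Polynomial.Chebyshev.T ℝ n).eval (Real.cosh u) = Real.cosh (n * u) := by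
  have h := Polynomial.Chebyshev.T_complex_cos (u * Complex.I) n
  rw [Complex.cos_mul_I] at h
  have h2 : (n : ℂ) * (u * Complex.I) = ((n : ℝ) * u : ℝ) * Complex.I := by
    push_cast; ring
  rw [h2, Complex.cos_mul_I] at h
  exact_mod_cast h

theorem cosh_formula (v : ℝ) (hv : 0 ≤ v) :
    (1 - Real.sqrt (1 - (1 / Real.cosh v) ^ 2)) / (1 / Real.cosh v) = Real.exp (-v) := by
  have hc : 0 < Real.cosh v := Real.cosh_pos v
  have hs : 0 ≤ Real.sinh v := Real.sinh_nonneg_iff.mpr hv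
  have h1 : 1 - (1 / Real.cosh v) ^ 2 = (Real.sinh v / Real.cosh v) ^ 2 := by
    have := Real.cosh_sq_sub_sinh_sq v
    field_simp
    nlinarith
  rw [h1, Real.sqrt_sq (by positivity)]
  rw [← Real.cosh_sub_sinh]
  field_simp

/-- For `P z = ((1 - √(1-z²))/z)^M` (`M` a positive integer) and
`Q_n z = 1 / T_n(1/z)` with `T_n` the Chebyshev polynomial of the first kind,
one has `P (Q_n z) = P z ^ n` for all `z ∈ (0,1]` and every `n ≥ 1`. -/
theorem chebyshev_pursuit_casual_stable (M : ℕ) (hM : 1 ≤ M) (n : ℕ) (hn : 1 ≤ n)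
    (z : ℝ) (hz : z ∈ Set.Ioc (0 : ℝ) 1) :
    ((1 - Real.sqrt (1 - (1 / (Polynomial.Chebyshev.T ℝ n).eval (1 / z)) ^ 2))
        / (1 / (Polynomial.Chebyshev.T ℝ n).eval (1 / z))) ^ M
      = (((1 - Real.sqrt (1 - z ^ 2)) / z) ^ M) ^ n := by
  obtain ⟨hz0, hz1⟩ := hz
  set s := Real.sqrt (1 - z ^ 2) with hs_def
  have hs2 : s ^ 2 = 1 - z ^ 2 := Real.sq_sqrt (by nlinarith)
  have hs0 : 0 ≤ s := Real.sqrt_nonneg _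
  have hs_lt : s < 1 := by nlinarith
  set t := (1 - s) / z with ht_def
  have ht0 : 0 < t := div_pos (by linarith) hz0
  have ht1 : t ≤ 1 := by
    rw [div_le_one hz0]
    nlinarith [Real.sq_sqrt (show (0:ℝ) ≤ 1 - z ^ 2 by nlinarith),
      Real.sqrt_nonneg (1 - z ^ 2)]
  set u := -Real.log t with hu_def
  have hu0 : 0 ≤ u := by
    simp only [hu_def, neg_nonneg]
    exact Real.log_nonpos (le_of_lt ht0) ht1
  have hexp : Real.exp (-u) = t := by
    rw [hu_def, neg_neg, Real.exp_log ht0]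
  have hcosh : Real.cosh u = 1 / z := by
    rw [Real.cosh_eq]
    have hts : t * z = 1 - s := by
      rw [ht_def]; field_simp
    have h1 : Real.exp u = 1 / t := by
      rw [← hexp, eq_div_iff (Real.exp_ne_zero _), ← Real.exp_add, add_neg_cancel, Real.exp_zero]
    rw [h1, hexp]
    rw [div_eq_div_iff (by positivity) (by positivity)]
    field_simp
    nlinarith [hts, hs2, sq_nonneg t, sq_nonneg z]
  have hT : (Polynomial.Chebyshev.T ℝ n).eval (1 / z) = Real.cosh (n * u) := by
    rw [← hcosh]
    exact_mod_cast T_real_cosh u n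
  have hnu : 0 ≤ (n : ℝ) * u := by positivity
  rw [hT, cosh_formula _ hnu]
  rw [← hexp, ← Real.exp_nat_mul, ← Real.exp_nat_mul, ← Real.exp_nat_mul]
  congr 1
  ring
end

section
/- The distribution with density p(x) = exp(-1/(2 ln x))/(√(2π) x (ln x)^{3/2}) for x > 1 (and 0 for x ≤ 1) has Mellin transform M(u) = exp(-√2 √u) for u > 0 — equivalently, if Y = ln X then Y has the Lévy distribution with Laplace transform E[e^{-sY}] = exp(-√(2s)); consequently M(n² u) = M(u)^n, so this distribution is pursuit product casually stable with degenerate normalization. -/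
/-!
Writing `x = exp y` turns the Mellin transform of `p` at `u` into the Laplace transform at `u` of
the Lévy density, and `y = t⁻²` turns that into `2 / √(2π) * ∫₀^∞ exp (-t² / 2 - u / t²) dt`.
Completing the square reduces this to the Cauchy–Schlömilch integral
`∫₀^∞ exp (-(a t - b / t)²) dt = √π / (2 a)`: the substitution `v = a t - b / t` gives
`∫₀^∞ (a + b / t²) exp (-(a t - b / t)²) dt = √π`, and the inversion `t ↦ b / (a t)` shows that
the two summands contribute equally. The stability identity is just `√(n² u) = n √u`.
-/

open Real MeasureTheory Set

section CauchySchlomilch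

variable {a b : ℝ}

lemma hasDerivAt_mul_sub_div (a b : ℝ) {t : ℝ} (ht : t ≠ 0) :
    HasDerivAt (fun t => a * t - b / t) (a + b / t ^ 2) t := by
  have h := ((hasDerivAt_id' t).const_mul a).fun_sub ((hasDerivAt_inv ht).const_mul b)
  rw [show a + b / t ^ 2 = a * 1 - b * -(t ^ 2)⁻¹ by ring]
  simpa only [div_eq_mul_inv] using h

lemma strictMonoOn_mul_sub_div (ha : 0 < a) (hb : 0 ≤ b) :
    StrictMonoOn (fun t => a * t - b / t) (Ioi 0) := by
  intro s (hs : 0 < s) t (ht : 0 < t) hst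
  have : b / t ≤ b / s := div_le_div_of_nonneg_left hb hs hst.le
  dsimp only
  nlinarith

lemma image_mul_sub_div_Ioi (ha : 0 < a) (hb : 0 < b) :
    (fun t => a * t - b / t) '' Ioi 0 = univ := by
  refine eq_univ_of_forall fun v => ?_
  -- the positive root of `a t² - v t - b = 0`
  have hd : v ^ 2 < v ^ 2 + 4 * a * b := by nlinarith [mul_pos ha hb]
  set r := √(v ^ 2 + 4 * a * b)
  have hr : r ^ 2 = v ^ 2 + 4 * a * b := sq_sqrt (by positivity)
  have hrv : -v < r := by
    calc -v ≤ |v| := neg_le_abs v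
      _ = √(v ^ 2) := (sqrt_sq_eq_abs v).symm
      _ < r := sqrt_lt_sqrt (sq_nonneg v) hd
  have hvr : 0 < v + r := by linarith
  refine ⟨(v + r) / (2 * a), mem_Ioi.2 (by positivity), ?_⟩
  field_simp
  linear_combination hr

lemma integrableOn_and_integral_deriv_mul_gaussian_comp_mul_sub_div (ha : 0 < a) (hb : 0 < b) :
    IntegrableOn (fun t => (a + b / t ^ 2) * exp (-(a * t - b / t) ^ 2)) (Ioi 0) ∧
      ∫ t in Ioi 0, (a + b / t ^ 2) * exp (-(a * t - b / t) ^ 2) = √π := by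
  have hderiv (t : ℝ) (ht : t ∈ Ioi 0) :
      HasDerivWithinAt (fun t => a * t - b / t) (a + b / t ^ 2) (Ioi 0) t :=
    (hasDerivAt_mul_sub_div a b (ne_of_gt ht)).hasDerivWithinAt
  have hinj := (strictMonoOn_mul_sub_div ha hb.le).injOn
  have habs (t : ℝ) : |a + b / t ^ 2| = a + b / t ^ 2 := abs_of_pos (by positivity)
  have hint := integrableOn_image_iff_integrableOn_abs_deriv_smul measurableSet_Ioi hderiv hinj
    (fun v => exp (-v ^ 2))
  have heq := integral_image_eq_integral_abs_deriv_smul measurableSet_Ioi hderiv hinj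
    (fun v => exp (-v ^ 2))
  simp only [image_mul_sub_div_Ioi ha hb, integrableOn_univ, setIntegral_univ, habs,
    smul_eq_mul] at hint heq
  refine ⟨hint.1 (by simpa using integrable_exp_neg_mul_sq one_pos), ?_⟩
  rw [← heq]
  simpa using integral_gaussian 1

lemma integral_div_sq_mul_exp_neg_sq_mul_sub_div (ha : 0 < a) (hb : 0 < b) :
    ∫ t in Ioi 0, b / t ^ 2 * exp (-(a * t - b / t) ^ 2) =
      a * ∫ t in Ioi 0, exp (-(a * t - b / t) ^ 2) := by
  -- the inversion `t ↦ (b / a) / t` swaps `a * t` and `b / t`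
  set c := b / a
  have hc : 0 < c := by positivity
  have hinv : Function.Involutive (fun t : ℝ => c / t) := fun t => div_div_cancel₀ hc.ne'
  have himage : (fun t : ℝ => c / t) '' Ioi 0 = Ioi 0 := by
    ext t; simp [hinv.image_eq_preimage_symm, div_pos_iff_of_pos_left hc]
  have hderiv (t : ℝ) (ht : t ∈ Ioi 0) :
      HasDerivWithinAt (fun t => c / t) (-(c / t ^ 2)) (Ioi 0) t := by
    simpa [div_eq_mul_inv] using ((hasDerivAt_inv (ne_of_gt ht)).const_mul c).hasDerivWithinAt
  have hsubst := integral_image_eq_integral_abs_deriv_smul measurableSet_Ioi hderiv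
    hinv.injective.injOn (fun t => a * exp (-(a * t - b / t) ^ 2))
  rw [himage, integral_const_mul] at hsubst
  rw [hsubst]
  refine setIntegral_congr_fun measurableSet_Ioi fun t (ht : 0 < t) => ?_
  have harg : a * (c / t) - b / (c / t) = -(a * t - b / t) := by
    simp only [c]; field_simp; ring
  rw [harg, neg_sq, abs_neg, abs_of_pos (by positivity), smul_eq_mul, ← mul_assoc]
  congr 1
  simp only [c]; field_simp

theorem integral_exp_neg_sq_mul_sub_div (ha : 0 < a) (hb : 0 < b) :
    ∫ t in Ioi 0, exp (-(a * t - b / t) ^ 2) = √π / (2 * a) := by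
  obtain ⟨hint, hval⟩ := integrableOn_and_integral_deriv_mul_gaussian_comp_mul_sub_div ha hb
  have hexp : IntegrableOn (fun t => a * exp (-(a * t - b / t) ^ 2)) (Ioi 0) := by
    refine hint.mono' (by fun_prop) (ae_of_all _ fun t => ?_)
    rw [norm_of_nonneg (by positivity)]
    gcongr
    exact le_add_of_nonneg_right (by positivity)
  have hdiv : IntegrableOn (fun t => b / t ^ 2 * exp (-(a * t - b / t) ^ 2)) (Ioi 0) := by
    refine (hint.sub hexp).congr_fun (fun t _ => ?_) measurableSet_Ioi
    simp only [Pi.sub_apply]; ring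
  simp only [add_mul] at hval
  rw [integral_add hexp hdiv, integral_div_sq_mul_exp_neg_sq_mul_sub_div ha hb,
    integral_const_mul] at hval
  rw [eq_div_iff (by positivity)]
  linarith

theorem integral_exp_neg_sq_mul_sub_sq_div (ha : 0 < a) (hb : 0 < b) :
    ∫ t in Ioi 0, exp (-(a * t) ^ 2 - (b / t) ^ 2) = √π / (2 * a) * exp (-(2 * a * b)) := by
  rw [← integral_exp_neg_sq_mul_sub_div ha hb, ← integral_mul_const]
  refine setIntegral_congr_fun measurableSet_Ioi fun t (ht : 0 < t) => ?_
  rw [← exp_add]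
  congr 1
  field_simp
  ring

end CauchySchlomilch

noncomputable def levyDensity (y : ℝ) : ℝ :=
  exp (-1 / (2 * y)) / (√(2 * π) * y ^ ((3 : ℝ) / 2))

theorem integral_exp_neg_mul_levyDensity {s : ℝ} (hs : 0 < s) :
    ∫ y in Ioi 0, exp (-s * y) * levyDensity y = exp (-√2 * √s) := by
  -- substitute `y = t⁻²`
  rw [← integral_comp_rpow_Ioi _ (show (-2 : ℝ) ≠ 0 by norm_num)]
  have hintegrand (t : ℝ) (ht : 0 < t) :
      (|(-2 : ℝ)| * t ^ ((-2 : ℝ) - 1)) •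
          (exp (-s * t ^ (-2 : ℝ)) * levyDensity (t ^ (-2 : ℝ))) =
        2 / √(2 * π) * exp (-((√2)⁻¹ * t) ^ 2 - (√s / t) ^ 2) := by
    have h32 : (t ^ (-2 : ℝ)) ^ ((3 : ℝ) / 2) = t ^ ((-2 : ℝ) - 1) := by
      rw [← rpow_mul ht.le]; norm_num
    have hsq : t ^ (-2 : ℝ) = (t ^ 2)⁻¹ := by rw [rpow_neg ht.le, rpow_two]
    have hexp : -s * (t ^ 2)⁻¹ + -1 / (2 * (t ^ 2)⁻¹) = -((√2)⁻¹ * t) ^ 2 - (√s / t) ^ 2 := by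
      rw [mul_pow, div_pow, inv_pow, sq_sqrt zero_le_two, sq_sqrt hs.le]
      field_simp
      ring
    rw [levyDensity, h32, smul_eq_mul, ← hexp, exp_add, ← hsq]
    field_simp
    norm_num
  rw [setIntegral_congr_fun measurableSet_Ioi fun t ht => hintegrand t ht, integral_const_mul,
    integral_exp_neg_sq_mul_sub_sq_div (by positivity) (by positivity),
    sqrt_mul zero_le_two]
  have hcoef : 2 * (√2)⁻¹ * √s = √2 * √s := by
    field_simp
    rw [sq_sqrt zero_le_two]
  rw [hcoef]
  field_simp

theorem integral_rpow_neg_mul_comp_log_div_Ioi_one (q : ℝ → ℝ) (u : ℝ) :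
    ∫ x in Ioi 1, x ^ (-u) * (q (log x) / x) = ∫ y in Ioi 0, exp (-u * y) * q y := by
  rw [← exp_zero, ← integral_comp_exp_Ioi]
  refine setIntegral_congr_fun measurableSet_Ioi fun y _ => ?_
  rw [smul_eq_mul, log_exp, ← exp_mul]
  field_simp

/-- The distribution with density `p x = exp(-1/(2 ln x))/(√(2π) x (ln x)^(3/2))` for `x > 1`
(the exponential of a Lévy random variable) has Mellin transform `M u = E[X^{-u}] = exp(-√2 √u)`
for `u > 0`; consequently `M (n² u) = M u ^ n`, so this distribution is pursuit product
casually stable with degenerate normalization. -/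
theorem log_levy_mellin_and_pursuit_product_casual_stable (u : ℝ) (hu : 0 < u) :
    (∫ x in Set.Ioi (1 : ℝ),
        x ^ (-u) * (Real.exp (-1 / (2 * Real.log x))
          / (Real.sqrt (2 * π) * x * (Real.log x) ^ ((3 : ℝ) / 2))))
      = Real.exp (-Real.sqrt 2 * Real.sqrt u) ∧
    ∀ n : ℕ, 1 ≤ n →
      Real.exp (-Real.sqrt 2 * Real.sqrt ((n : ℝ) ^ 2 * u))
        = (Real.exp (-Real.sqrt 2 * Real.sqrt u)) ^ n := by
  refine ⟨?_, fun n _ => ?_⟩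
  · rw [← integral_exp_neg_mul_levyDensity hu,
      ← integral_rpow_neg_mul_comp_log_div_Ioi_one levyDensity u]
    congr 1
    ext x
    rw [levyDensity]
    ring
  · rw [sqrt_mul (by positivity), sqrt_sq n.cast_nonneg, ← exp_nat_mul]
    ring_nf
end

section
/- The Gompertz–Makeham distribution with survival function F̄(x) = exp(ξ(1 - e^{λx})) for x ≥ 0 (ξ, λ > 0) is pursuit min-casually stable: defining Ḡ_n(x) = exp(-(1/λ) ln(1 + n(e^{λx} - 1))) = (1 + n(e^{λx} - 1))^{-1/λ}, one has F̄(-ln Ḡ_n(x)) = F̄(x)^n for all x ≥ 0, and Ḡ_n is a valid survival function (nonincreasing, Ḡ_n(0) = 1, Ḡ_n(x) → 0 as x → ∞). -/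
open Real Filter

/-- The Gompertz–Makeham distribution with survival function `F̄ x = exp(ξ(1 - e^(λx)))`
(`ξ, λ > 0`) is pursuit min-casually stable: with
`Ḡ_n x = (1 + n(e^(λx) - 1))^(-1/λ)` one has `F̄(-ln Ḡ_n x) = F̄ x ^ n` for all `x ≥ 0`,
and `Ḡ_n` is a valid survival function on `[0,∞)` (nonincreasing, `Ḡ_n 0 = 1`,
`Ḡ_n x → 0` as `x → ∞`). -/
theorem gompertz_makeham_pursuit_min_casual_stable (ξ lam : ℝ) (hξ : 0 < ξ) (hlam : 0 < lam)
    (n : ℕ) (hn : 1 ≤ n) :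
    (∀ x : ℝ, 0 ≤ x →
      Real.exp (ξ * (1 - Real.exp (lam *
          (-Real.log ((1 + n * (Real.exp (lam * x) - 1)) ^ (-(1 : ℝ) / lam))))))
        = (Real.exp (ξ * (1 - Real.exp (lam * x)))) ^ n) ∧
    AntitoneOn (fun x : ℝ => (1 + n * (Real.exp (lam * x) - 1)) ^ (-(1 : ℝ) / lam))
      (Set.Ici 0) ∧
    ((1 : ℝ) + n * (Real.exp (lam * 0) - 1)) ^ (-(1 : ℝ) / lam) = 1 ∧
    Tendsto (fun x : ℝ => (1 + n * (Real.exp (lam * x) - 1)) ^ (-(1 : ℝ) / lam))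
      atTop (nhds 0) := by
  have hnpos : (0 : ℝ) < n := by exact_mod_cast Nat.lt_of_lt_of_le Nat.zero_lt_one hn
  have hbase : ∀ x : ℝ, 0 ≤ x → (0 : ℝ) < 1 + n * (Real.exp (lam * x) - 1) := by
    intro x hx
    have h1 : (1 : ℝ) ≤ Real.exp (lam * x) := by
      apply Real.one_le_exp; positivity
    nlinarith
  refine ⟨?_, ?_, ?_, ?_⟩
  · intro x hx
    have hb := hbase x hx
    have hlog : Real.log ((1 + n * (Real.exp (lam * x) - 1)) ^ (-(1 : ℝ) / lam))
        = (-(1 : ℝ) / lam) * Real.log (1 + n * (Real.exp (lam * x) - 1)) :=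
      Real.log_rpow hb _
    rw [hlog]
    have : lam * -(-(1 : ℝ) / lam * Real.log (1 + ↑n * (Real.exp (lam * x) - 1)))
        = Real.log (1 + ↑n * (Real.exp (lam * x) - 1)) := by
      field_simp
    rw [this, Real.exp_log hb, ← Real.exp_nat_mul]
    ring_nf
  · intro a ha b hb hab
    have h1 : 1 + (n : ℝ) * (Real.exp (lam * a) - 1) ≤ 1 + n * (Real.exp (lam * b) - 1) := by
      have : Real.exp (lam * a) ≤ Real.exp (lam * b) := by
        apply Real.exp_le_exp.mpr; nlinarith
      nlinarith
    exact Real.rpow_le_rpow_of_nonpos (hbase a ha) h1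
      (by apply div_nonpos_of_nonpos_of_nonneg <;> linarith)
  · simp
  · have hb : Tendsto (fun x : ℝ => 1 + (n : ℝ) * (Real.exp (lam * x) - 1)) atTop atTop := by
      apply Filter.tendsto_atTop_add_const_left
      apply Filter.Tendsto.const_mul_atTop hnpos
      apply Filter.tendsto_atTop_add_const_right
      exact (Real.tendsto_exp_atTop).comp (Filter.Tendsto.const_mul_atTop hlam tendsto_id)
    have := (tendsto_rpow_neg_atTop (y := 1/lam) (by positivity)).comp hb
    simpa [Function.comp_def, neg_div] using this
end

section
/- The tempered stable Laplace transform L(s) = exp(-λ^α(1 + tan(πα/2))((s+h)^α - h^α)) with α ∈ (0,1), h ≥ 0, λ > 0 satisfies the casual stability equation: with g_n(s) = exp(h - ((1/n)(s+h)^α + ((n-1)/n) h^α)^{1/α}), one has L(-ln g_n(s))^n = L(s) for all s ≥ 0 and every integer n ≥ 1. -/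
open Real

/-- The tempered stable Laplace transform
`L s = exp(-λ^α (1 + tan(πα/2)) ((s+h)^α - h^α))`, `α ∈ (0,1)`, `h ≥ 0`, `λ > 0`,
is casually stable: with `g_n s = exp(h - ((1/n)(s+h)^α + ((n-1)/n) h^α)^(1/α))`,
so `-ln (g_n s) = ((1/n)(s+h)^α + ((n-1)/n) h^α)^(1/α) - h`, one has
`L(-ln (g_n s)) ^ n = L s` for all `s ≥ 0` and every `n ≥ 1`. -/
theorem tempered_stable_casual_stable (α h lam : ℝ) (hα : α ∈ Set.Ioo (0 : ℝ) 1)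
    (hh : 0 ≤ h) (hlam : 0 < lam) (n : ℕ) (hn : 1 ≤ n) (s : ℝ) (hs : 0 ≤ s) :
    (Real.exp (-lam ^ α * (1 + Real.tan (π * α / 2)) *
        ((((-Real.log (Real.exp (h - (((1 : ℝ) / n) * (s + h) ^ α
              + (((n : ℝ) - 1) / n) * h ^ α) ^ (1 / α)))) + h) ^ α) - h ^ α))) ^ n
      = Real.exp (-lam ^ α * (1 + Real.tan (π * α / 2)) * ((s + h) ^ α - h ^ α)) := by
  obtain ⟨hα0, hα1⟩ := hα
  have hn0 : (0 : ℝ) < n := by exact_mod_cast Nat.lt_of_lt_of_le Nat.zero_lt_one hn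
  set A : ℝ := ((1 : ℝ) / n) * (s + h) ^ α + (((n : ℝ) - 1) / n) * h ^ α with hA
  have hA0 : 0 ≤ A := by
    apply add_nonneg
    · exact mul_nonneg (by positivity) (Real.rpow_nonneg (by linarith) _)
    · apply mul_nonneg
      · apply div_nonneg _ hn0.le
        have : (1 : ℝ) ≤ n := by exact_mod_cast hn
        linarith
      · exact Real.rpow_nonneg hh _
  rw [Real.log_exp]
  have hsimp : -(h - A ^ (1 / α)) + h = A ^ (1 / α) := by ring
  rw [hsimp]
  have hrr : (A ^ (1 / α)) ^ α = A := by
    rw [one_div, Real.rpow_inv_rpow hA0 hα0.ne']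
  rw [hrr, ← Real.exp_nat_mul]
  congr 1
  have : (n : ℝ) * (A - h ^ α) = (s + h) ^ α - h ^ α := by
    rw [hA]; field_simp; ring
  linear_combination (-lam ^ α * (1 + Real.tan (π * α / 2))) * this
end
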